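/- arXiv:1912.01733 — 3 statements merged into one kernel-verified Lean document; each statement's English description precedes it below -/
import Mathlib

section
/- Let φ : P(ℝ) → ℝ be translation invariant and monotone with respect to first-order stochastic dominance. Then φ is bounded, i.e., there exists C such that |φ(μ)| ≤ C for all μ ∈ P(ℝ). -/
open MeasureTheory

/-- First-order stochastic dominance: `StochDom μ ν` means `μ ≤ ν`,
i.e. `μ((-∞,x]) ≥ ν((-∞,x])` for all `x`. -/
def StochDom (μ ν : MeasureTheory.Measure ℝ) : Prop :=
  ∀ x : ℝ, ν (Set.Iic x) ≤ μ (Set.Iic x)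

/-- Convolution of probability measures. -/
noncomputable def pconv (μ ν : ProbabilityMeasure ℝ) : ProbabilityMeasure ℝ :=
  ⟨(μ : MeasureTheory.Measure ℝ).conv (ν : MeasureTheory.Measure ℝ), by infer_instance⟩

/-- The point mass at `x` as a probability measure. -/
noncomputable def pdirac (x : ℝ) : ProbabilityMeasure ℝ :=
  ⟨MeasureTheory.Measure.dirac x, inferInstance⟩

/-- First-order stochastic dominance on probability measures. -/
def PSD (μ ν : ProbabilityMeasure ℝ) : Prop :=
  StochDom (μ : MeasureTheory.Measure ℝ) (ν : MeasureTheory.Measure ℝ)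

/-! If `φ` were unbounded above, pick `μ k` with `k < φ (μ k)` and translate each `μ k` so that
it puts mass at least `1 - 1/(k+1)` on `(-∞, 0]`. The translated family is then uniformly tight
at `+∞`, so the infimum of its distribution functions is again a distribution function, that of a
measure `ν` dominating every member of the family; monotonicity and translation invariance give
`k < φ ν` for all `k`. Boundedness from below follows by applying this to `μ ↦ -φ (μ ∘ neg⁻¹)`,
since reflection reverses stochastic dominance and turns translations into translations. -/

open Set Filter Topology ProbabilityTheory

namespace StieltjesFunction

variable {R : Type*} [LinearOrder R] [TopologicalSpace R] {ι : Type*} [Nonempty ι]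

noncomputable def iInf (f : ι → StieltjesFunction R) (hf : ∀ x, BddBelow (range fun i ↦ f i x)) :
    StieltjesFunction R where
  toFun x := ⨅ i, f i x
  mono' _ _ hxy := ciInf_mono (hf _) fun i ↦ (f i).mono hxy
  right_continuous' x := by
    refine tendsto_order.2 ⟨fun a ha ↦ ?_, fun a ha ↦ ?_⟩
    · filter_upwards [self_mem_nhdsWithin] with y hy
      exact ha.trans_le (ciInf_mono (hf x) fun i ↦ (f i).mono hy)
    · obtain ⟨i, hi⟩ := exists_lt_of_ciInf_lt ha
      filter_upwards [((f i).right_continuous x).eventually (gt_mem_nhds hi)] with y hy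
      exact (ciInf_le (hf y) i).trans_lt hy

end StieltjesFunction

lemma exists_psd_upper_bound_of_tight {ι : Type*} [Nonempty ι] (μ : ι → ProbabilityMeasure ℝ)
    (htight : ∀ a < 1, ∃ t, ∀ i, a ≤ cdf (μ i) t) :
    ∃ ν : ProbabilityMeasure ℝ, ∀ i, PSD (μ i) ν := by
  have hbdd (x : ℝ) : BddBelow (range fun i ↦ cdf (μ i) x) :=
    ⟨0, forall_mem_range.2 fun i ↦ cdf_nonneg _ x⟩
  set G := StieltjesFunction.iInf (fun i ↦ cdf (μ i)) hbdd
  obtain ⟨i₀⟩ := ‹Nonempty ι›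
  have hG_bot : Tendsto G atBot (𝓝 0) := by
    exact tendsto_of_tendsto_of_tendsto_of_le_of_le tendsto_const_nhds (tendsto_cdf_atBot (μ i₀))
      (fun x ↦ le_ciInf fun i ↦ cdf_nonneg _ x) (fun x ↦ ciInf_le (hbdd x) i₀)
  have hG_top : Tendsto G atTop (𝓝 1) := by
    refine tendsto_order.2 ⟨fun a ha ↦ ?_, fun a ha ↦ ?_⟩
    · obtain ⟨b, hab, hb⟩ := exists_between ha
      obtain ⟨t, ht⟩ := htight b hb
      filter_upwards [eventually_ge_atTop t] with x hx
      exact hab.trans_le ((le_ciInf ht).trans (G.mono hx))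
    · exact Eventually.of_forall fun x ↦
        ((ciInf_le (hbdd x) i₀).trans (cdf_le_one _ x)).trans_lt ha
  refine ⟨⟨G.measure, G.isProbabilityMeasure hG_bot hG_top⟩, fun i x ↦ ?_⟩
  change G.measure (Iic x) ≤ (μ i : Measure ℝ) (Iic x)
  rw [G.measure_Iic hG_bot, sub_zero, ← ofReal_cdf]
  exact ENNReal.ofReal_le_ofReal (ciInf_le (hbdd x) i)

lemma StochDom.measure_Iio_le {μ ν : Measure ℝ} (h : StochDom μ ν) (a : ℝ) :
    ν (Iio a) ≤ μ (Iio a) := by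
  obtain ⟨u, hu_mono, hu_lt, hu_lim⟩ := exists_seq_strictMono_tendsto a
  have hmono : Monotone fun n ↦ Iic (u n) := fun m n hmn ↦ Iic_subset_Iic.2 (hu_mono.monotone hmn)
  rw [← iUnion_Iic_eq_Iio_of_lt_of_tendsto hu_lt hu_lim, hmono.measure_iUnion,
    hmono.measure_iUnion]
  exact iSup_mono fun n ↦ h _

lemma StochDom.map_neg {μ ν : Measure ℝ} [IsProbabilityMeasure μ] [IsProbabilityMeasure ν]
    (h : StochDom μ ν) : StochDom (ν.map Neg.neg) (μ.map Neg.neg) := by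
  intro x
  have hpre : (Neg.neg ⁻¹' Iic x : Set ℝ) = (Iio (-x))ᶜ := by ext y; simp
  rw [Measure.map_apply measurable_neg measurableSet_Iic, Measure.map_apply measurable_neg
    measurableSet_Iic, hpre, prob_compl_eq_one_sub measurableSet_Iio,
    prob_compl_eq_one_sub measurableSet_Iio]
  exact tsub_le_tsub_left (h.measure_Iio_le _) 1

lemma coe_pconv_pdirac (μ : ProbabilityMeasure ℝ) (c : ℝ) :
    (pconv μ (pdirac c) : Measure ℝ) = (μ : Measure ℝ).map (· + c) :=
  Measure.conv_dirac _ c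

lemma cdf_pconv_pdirac (μ : ProbabilityMeasure ℝ) (c t : ℝ) :
    cdf (pconv μ (pdirac c)) t = cdf μ (t - c) := by
  rw [cdf_eq_real, cdf_eq_real, coe_pconv_pdirac, map_measureReal_apply (by fun_prop)
    measurableSet_Iic]
  congr 1
  ext y
  simp [le_sub_iff_add_le]

noncomputable def reflect (μ : ProbabilityMeasure ℝ) : ProbabilityMeasure ℝ :=
  μ.map measurable_neg.aemeasurable

lemma coe_reflect (μ : ProbabilityMeasure ℝ) :
    (reflect μ : Measure ℝ) = (μ : Measure ℝ).map Neg.neg :=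
  ProbabilityMeasure.toMeasure_map _ _

@[simp]
lemma reflect_reflect (μ : ProbabilityMeasure ℝ) : reflect (reflect μ) = μ := by
  apply ProbabilityMeasure.toMeasure_injective
  rw [coe_reflect, coe_reflect, Measure.map_map measurable_neg measurable_neg]
  simp

lemma reflect_pconv_pdirac (μ : ProbabilityMeasure ℝ) (x : ℝ) :
    reflect (pconv μ (pdirac x)) = pconv (reflect μ) (pdirac (-x)) := by
  apply ProbabilityMeasure.toMeasure_injective
  rw [coe_reflect, coe_pconv_pdirac, coe_pconv_pdirac, coe_reflect,
    Measure.map_map measurable_neg (by fun_prop), Measure.map_map (by fun_prop) measurable_neg]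
  congr 1
  funext y
  simp [add_comm]

lemma PSD.reflect {μ ν : ProbabilityMeasure ℝ} (h : PSD μ ν) : PSD (reflect ν) (reflect μ) := by
  unfold PSD
  rw [coe_reflect, coe_reflect]
  exact StochDom.map_neg h

lemma exists_cdf_pconv_pdirac_zero_ge (μ : ProbabilityMeasure ℝ) {a : ℝ} (ha : a < 1) :
    ∃ c, a ≤ cdf (pconv μ (pdirac c)) 0 := by
  obtain ⟨x, hx⟩ := ((tendsto_cdf_atTop (μ : Measure ℝ)).eventually (le_mem_nhds ha)).exists
  exact ⟨-x, by rwa [cdf_pconv_pdirac, zero_sub, neg_neg]⟩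

lemma tight_of_tendsto_cdf_zero (μ : ℕ → ProbabilityMeasure ℝ)
    (h : Tendsto (fun k ↦ cdf (μ k) 0) atTop (𝓝 1)) :
    ∀ a < 1, ∃ t, ∀ k, a ≤ cdf (μ k) t := by
  intro a ha
  obtain ⟨K, hK⟩ := eventually_atTop.1 (h.eventually (le_mem_nhds ha))
  have hsmall : ∀ᶠ t in atTop, ∀ k ∈ Iio K, a ≤ cdf (μ k) t :=
    (eventually_all_finite (finite_Iio K)).2 fun k _ ↦
      (tendsto_cdf_atTop (μ k : Measure ℝ)).eventually (le_mem_nhds ha)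
  obtain ⟨t, ht, ht0⟩ := (hsmall.and (eventually_ge_atTop 0)).exists
  refine ⟨t, fun k ↦ ?_⟩
  rcases lt_or_ge k K with hk | hk
  · exact ht k hk
  · exact (hK k hk).trans ((cdf (μ k)).mono ht0)

lemma bddAbove_range_of_monotone_of_translation_invariant (φ : ProbabilityMeasure ℝ → ℝ)
    (mono : ∀ μ ν, PSD μ ν → φ μ ≤ φ ν) (tinv : ∀ μ x, φ (pconv μ (pdirac x)) = φ μ) :
    BddAbove (range φ) := by
  by_contra hφ
  choose μ hμ using fun k : ℕ ↦ by simpa using not_bddAbove_iff.1 hφ k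
  choose c hc using fun k : ℕ ↦
    exists_cdf_pconv_pdirac_zero_ge (μ k) (sub_lt_self 1 (Nat.one_div_pos_of_nat (n := k)))
  set ρ := fun k ↦ pconv (μ k) (pdirac (c k))
  have hρ : Tendsto (fun k ↦ cdf (ρ k) 0) atTop (𝓝 1) := by
    refine tendsto_of_tendsto_of_tendsto_of_le_of_le ?_ tendsto_const_nhds hc
      fun k ↦ cdf_le_one _ 0
    simpa using tendsto_const_nhds.sub (tendsto_one_div_add_atTop_nhds_zero_nat (𝕜 := ℝ))
  obtain ⟨ν, hν⟩ := exists_psd_upper_bound_of_tight ρ (tight_of_tendsto_cdf_zero ρ hρ)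
  obtain ⟨k, hk⟩ := exists_nat_gt (φ ν)
  have := mono _ _ (hν k)
  rw [tinv] at this
  linarith [hμ k]

lemma bddBelow_range_of_monotone_of_translation_invariant (φ : ProbabilityMeasure ℝ → ℝ)
    (mono : ∀ μ ν, PSD μ ν → φ μ ≤ φ ν) (tinv : ∀ μ x, φ (pconv μ (pdirac x)) = φ μ) :
    BddBelow (range φ) := by
  obtain ⟨C, hC⟩ := bddAbove_range_of_monotone_of_translation_invariant (fun μ ↦ -φ (reflect μ))
    (fun μ ν h ↦ neg_le_neg (mono _ _ h.reflect)) (fun μ x ↦ by rw [reflect_pconv_pdirac, tinv])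
  refine ⟨-C, forall_mem_range.2 fun μ ↦ ?_⟩
  exact neg_le.1 (by simpa using hC (mem_range_self (reflect μ)))

theorem translation_invariant_monotone_is_bounded
    (φ : ProbabilityMeasure ℝ → ℝ)
    (mono : ∀ μ ν : ProbabilityMeasure ℝ, PSD μ ν → φ μ ≤ φ ν)
    (tinv : ∀ (μ : ProbabilityMeasure ℝ) (x : ℝ), φ (pconv μ (pdirac x)) = φ μ) :
    ∃ C : ℝ, ∀ μ : ProbabilityMeasure ℝ, |φ μ| ≤ C := by
  obtain ⟨C₁, hC₁⟩ := bddAbove_range_of_monotone_of_translation_invariant φ mono tinv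
  obtain ⟨C₂, hC₂⟩ := bddBelow_range_of_monotone_of_translation_invariant φ mono tinv
  refine ⟨max C₁ (-C₂), fun μ ↦ abs_le.2 ⟨?_, ?_⟩⟩
  · linarith [le_max_right C₁ (-C₂), hC₂ (mem_range_self μ)]
  · exact (hC₁ (mem_range_self μ)).trans (le_max_left _ _)
end

section
/- Let φ : P(ℝ) → ℝ be a monotone homomorphism with φ(δ_1) = 0. Then φ(δ_x) = 0 for all x ∈ ℝ, i.e., φ is translation invariant. -/
open MeasureTheory

/-!
The map `x ↦ φ(δ_x)` is additive, since `δ_x * δ_y = δ_(x+y)`, and monotone, since `x ≤ y`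
implies `δ_x ≤ δ_y`. An additive map vanishing at `1` vanishes on `ℚ`, and a monotone one is
then squeezed to `0` between rationals.
-/

lemma pconv_pdirac_pdirac (x y : ℝ) : pconv (pdirac x) (pdirac y) = pdirac (x + y) := by
  apply Subtype.ext
  change (Measure.dirac x).conv (Measure.dirac y) = Measure.dirac (x + y)
  rw [Measure.conv, Measure.dirac_prod_dirac, Measure.map_dirac' measurable_add]

lemma psd_pdirac_of_le {x y : ℝ} (h : x ≤ y) : PSD (pdirac x) (pdirac y) := by
  intro t
  change Measure.dirac y (Set.Iic t) ≤ Measure.dirac x (Set.Iic t)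
  by_cases hy : y ≤ t
  · simp [hy, h.trans hy]
  · simp [hy]

theorem AddMonoidHom.eq_zero_of_monotone_of_map_one {K M : Type*} [Field K] [LinearOrder K]
    [IsStrictOrderedRing K] [Archimedean K] [AddCommGroup M] [PartialOrder M] [Module ℚ M]
    (f : K →+ M) (hf : Monotone f) (h1 : f 1 = 0) : f = 0 := by
  have hrat : ∀ q : ℚ, f q = 0 := fun q => by
    rw [← Rat.smul_one_eq_cast, map_rat_smul, h1, smul_zero]
  ext x
  rw [AddMonoidHom.zero_apply]
  obtain ⟨q, hq⟩ := exists_rat_lt x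
  obtain ⟨r, hr⟩ := exists_rat_gt x
  exact le_antisymm ((hf hr.le).trans_eq (hrat r)) ((hrat q).symm.trans_le (hf hq.le))

theorem hom_dirac_zero (φ : ProbabilityMeasure ℝ → ℝ)
    (mono : ∀ μ ν : ProbabilityMeasure ℝ, PSD μ ν → φ μ ≤ φ ν)
    (hom : ∀ μ ν : ProbabilityMeasure ℝ, φ (pconv μ ν) = φ μ + φ ν)
    (h1 : φ (pdirac 1) = 0) :
    (∀ x : ℝ, φ (pdirac x) = 0) ∧
    (∀ (μ : ProbabilityMeasure ℝ) (x : ℝ), φ (pconv μ (pdirac x)) = φ μ) := by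
  let F : ℝ →+ ℝ := AddMonoidHom.mk' (φ ∘ pdirac) fun x y => by
    simp only [Function.comp_apply, ← pconv_pdirac_pdirac, hom]
  have hF : F = 0 :=
    F.eq_zero_of_monotone_of_map_one (fun _ _ h => mono _ _ (psd_pdirac_of_le h)) h1
  have hdirac (x : ℝ) : φ (pdirac x) = 0 := DFunLike.congr_fun hF x
  exact ⟨hdirac, fun μ x => by rw [hom, hdirac, add_zero]⟩
end

section
/- Assume the following result (Theorem 1 of Pomatto–Strack–Tamuz): for all Borel probability measures μ', ν' on ℝ with finite first moments and E[μ'] < E[ν'], there exists a Borel probability measure η' on ℝ such that μ' * η' ≤ ν' * η' in first-order stochastic dominance. Let μ, ν ∈ P(ℝ) be such that μ has expectation -∞ (i.e., ∫_0^∞ x dμ < ∞ and ∫_{-∞}^0 |x| dμ = ∞) and ν has expectation +∞ (i.e., ∫_{-∞}^0 |x| dν < ∞ and ∫_0^∞ x dν = ∞). Then there exists η ∈ P(ℝ) with μ * η ≤ ν * η. -/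
/-!
Truncating `μ` from below at `-T` and `ν` from above at `T` moves `μ` up and `ν` down in the
stochastic order. Since `E[μ] = -∞` and `E[ν] = +∞`, for large `T` the truncations have finite
means of opposite signs, so Pomatto–Strack–Tamuz applies to them; convolution with a fixed
measure preserves the stochastic order, which transfers the resulting comparison back to `μ, ν`.
-/

open MeasureTheory

open Filter Topology

theorem MeasureTheory.Measure.conv_apply_Iic (α η : Measure ℝ) [SFinite α] [SFinite η] (x : ℝ) :
    α.conv η (Set.Iic x) = ∫⁻ y, α (Set.Iic (x - y)) ∂η := by
  rw [Measure.conv_comm, Measure.conv, Measure.map_apply (by fun_prop) measurableSet_Iic,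
    Measure.prod_apply (measurableSet_Iic.preimage (by fun_prop))]
  refine lintegral_congr fun y => congrArg α (Set.ext fun b => ?_)
  simp [le_sub_iff_add_le']

namespace StochDom

theorem trans {α β γ : Measure ℝ} (h₁ : StochDom α β) (h₂ : StochDom β γ) : StochDom α γ :=
  fun x => (h₂ x).trans (h₁ x)

theorem conv_right {α β : Measure ℝ} [SFinite α] [SFinite β] (h : StochDom α β)
    (η : Measure ℝ) [SFinite η] : StochDom (α.conv η) (β.conv η) := fun x => by
  rw [Measure.conv_apply_Iic, Measure.conv_apply_Iic]
  exact lintegral_mono fun y => h _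

end StochDom

theorem stochDom_map_of_le (μ : Measure ℝ) {f : ℝ → ℝ} (hf : Measurable f)
    (hle : ∀ x, x ≤ f x) : StochDom μ (μ.map f) := fun x => by
  rw [Measure.map_apply hf measurableSet_Iic]
  exact measure_mono fun y hy => (hle y).trans hy

theorem stochDom_map_of_ge (μ : Measure ℝ) {f : ℝ → ℝ} (hf : Measurable f)
    (hge : ∀ x, f x ≤ x) : StochDom (μ.map f) μ := fun x => by
  rw [Measure.map_apply hf measurableSet_Iic]
  exact measure_mono fun y (hy : y ≤ x) => (hge y).trans hy

theorem lintegral_ofReal_eq_setLIntegral_Ici (μ : Measure ℝ) :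
    ∫⁻ x, ENNReal.ofReal x ∂μ = ∫⁻ x in Set.Ici 0, ENNReal.ofReal x ∂μ :=
  (setLIntegral_eq_of_support_subset fun _ hx =>
    (ENNReal.ofReal_pos.1 (pos_iff_ne_zero.2 hx)).le).symm

theorem lintegral_ofReal_neg_eq_setLIntegral_Iic_abs (μ : Measure ℝ) :
    ∫⁻ x, ENNReal.ofReal (-x) ∂μ = ∫⁻ x in Set.Iic 0, ENNReal.ofReal |x| ∂μ := by
  rw [← setLIntegral_eq_of_support_subset (s := Set.Iic 0) fun _ hx =>
    (neg_pos.1 (ENNReal.ofReal_pos.1 (pos_iff_ne_zero.2 hx))).le]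
  exact setLIntegral_congr_fun measurableSet_Iic fun x (hx : x ≤ 0) => by rw [abs_of_nonpos hx]

section Truncation

variable {α : Type*} [MeasurableSpace α] {μ : Measure α} [IsFiniteMeasure μ]

theorem integrable_min_const {g : α → ℝ} (hg : Measurable g) (hg0 : ∀ x, 0 ≤ g x) (T : ℝ) :
    Integrable (fun x => min (g x) T) μ :=
  (integrable_const |T|).mono' (hg.min measurable_const).aestronglyMeasurable <|
    ae_of_all _ fun x => abs_le.2 ⟨by grind, by grind⟩

theorem tendsto_integral_min_atTop {g : α → ℝ} (hg : Measurable g) (hg0 : ∀ x, 0 ≤ g x)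
    (hinf : ∫⁻ x, ENNReal.ofReal (g x) ∂μ = ⊤) :
    Tendsto (fun T : ℝ => ∫ x, min (g x) T ∂μ) atTop atTop := by
  have hint := integrable_min_const (μ := μ) hg hg0
  refine tendsto_atTop_atTop_of_monotone (fun S T hST => integral_mono (hint S) (hint T)
    fun x => min_le_min_left _ hST) fun b => ?_
  by_contra! hlt
  have hle (n : ℕ) : ∫⁻ x, ENNReal.ofReal (min (g x) n) ∂μ ≤ ENNReal.ofReal b := by
    rw [← ofReal_integral_eq_lintegral_ofReal (hint n)
      (ae_of_all _ fun x => le_min (hg0 x) n.cast_nonneg)]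
    exact ENNReal.ofReal_le_ofReal (hlt n).le
  have hlim : Tendsto (fun n : ℕ => ∫⁻ x, ENNReal.ofReal (min (g x) n) ∂μ) atTop
      (𝓝 (∫⁻ x, ENNReal.ofReal (g x) ∂μ)) := by
    refine lintegral_tendsto_of_tendsto_of_monotone
      (fun n => (hg.min measurable_const).ennreal_ofReal.aemeasurable)
      (ae_of_all _ fun x m n hmn => ENNReal.ofReal_le_ofReal (min_le_min_left _ (by simpa)))
      (ae_of_all _ fun x => tendsto_const_nhds.congr' ?_)
    filter_upwards [eventually_ge_atTop ⌈g x⌉₊] with n hn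
    rw [min_eq_left ((Nat.le_ceil _).trans (Nat.cast_le.2 hn))]
  exact ENNReal.ofReal_ne_top (top_unique (hinf ▸ le_of_tendsto' hlim hle))

theorem integrable_max_const {f : α → ℝ} (hf : Measurable f)
    (hpos : ∫⁻ x, ENNReal.ofReal (f x) ∂μ ≠ ⊤) (c : ℝ) :
    Integrable (fun x => max (f x) c) μ := by
  have hpos_int : Integrable (fun x => max (f x) 0) μ := by
    simpa only [ENNReal.toReal_ofReal'] using
      integrable_toReal_of_lintegral_ne_top hf.ennreal_ofReal.aemeasurable hpos
  refine (hpos_int.add (integrable_const |c|)).mono'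
    (hf.max measurable_const).aestronglyMeasurable <|
    ae_of_all _ fun x => abs_le.2 ⟨?_, max_le ?_ ?_⟩ <;>
    simp only [Pi.add_apply] <;>
    linarith [neg_abs_le c, le_abs_self c, le_max_left (f x) c, le_max_right (f x) c,
      le_max_left (f x) 0, le_max_right (f x) 0]

theorem tendsto_integral_max_neg_atBot {f : α → ℝ} (hf : Measurable f)
    (hpos : ∫⁻ x, ENNReal.ofReal (f x) ∂μ ≠ ⊤) (hneg : ∫⁻ x, ENNReal.ofReal (-f x) ∂μ = ⊤) :
    Tendsto (fun T : ℝ => ∫ x, max (f x) (-T) ∂μ) atTop atBot := by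
  have hneg_meas : Measurable fun x => max (-f x) 0 := hf.neg.max measurable_const
  have htop := tendsto_integral_min_atTop (μ := μ) hneg_meas (fun x => le_max_right _ _)
    (by simpa [ENNReal.ofReal_max] using hneg)
  refine tendsto_atBot.2 fun b => (tendsto_atTop.1 htop (∫ x, max (f x) 0 ∂μ - b)).mono
    fun T hT => ?_
  -- `max f (-T) = f⁺ - min f⁻ T`, with equality for `T ≥ 0`
  calc ∫ x, max (f x) (-T) ∂μ ≤ ∫ x, (max (f x) 0 - min (max (-f x) 0) T) ∂μ :=
        integral_mono (integrable_max_const hf hpos _)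
          ((integrable_max_const hf hpos 0).sub (integrable_min_const hneg_meas (by simp) T))
          fun x => by grind
    _ = ∫ x, max (f x) 0 ∂μ - ∫ x, min (max (-f x) 0) T ∂μ :=
        integral_sub (integrable_max_const hf hpos 0) (integrable_min_const hneg_meas (by simp) T)
    _ ≤ b := by linarith

end Truncation

theorem exists_eta_of_minus_plus_infinity
    (PST : ∀ μ' ν' : Measure ℝ, IsProbabilityMeasure μ' → IsProbabilityMeasure ν' →
      Integrable (fun x : ℝ => x) μ' → Integrable (fun x : ℝ => x) ν' →
      (∫ x, x ∂μ') < (∫ x, x ∂ν') →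
      ∃ η' : Measure ℝ, IsProbabilityMeasure η' ∧ StochDom (μ'.conv η') (ν'.conv η'))
    (μ ν : Measure ℝ) [IsProbabilityMeasure μ] [IsProbabilityMeasure ν]
    (hμpos : (∫⁻ x in Set.Ici (0 : ℝ), ENNReal.ofReal x ∂μ) < ⊤)
    (hμneg : (∫⁻ x in Set.Iic (0 : ℝ), ENNReal.ofReal |x| ∂μ) = ⊤)
    (hνneg : (∫⁻ x in Set.Iic (0 : ℝ), ENNReal.ofReal |x| ∂ν) < ⊤)
    (hνpos : (∫⁻ x in Set.Ici (0 : ℝ), ENNReal.ofReal x ∂ν) = ⊤) :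
    ∃ η : Measure ℝ, IsProbabilityMeasure η ∧ StochDom (μ.conv η) (ν.conv η) := by
  rw [← lintegral_ofReal_eq_setLIntegral_Ici] at hμpos hνpos
  rw [← lintegral_ofReal_neg_eq_setLIntegral_Iic_abs] at hμneg hνneg
  have hμ := tendsto_integral_max_neg_atBot measurable_id' hμpos.ne hμneg
  have hν := tendsto_integral_max_neg_atBot measurable_neg hνneg.ne (by simpa using hνpos)
  obtain ⟨T, hμT, hνT⟩ := ((hμ.eventually_lt_atBot 0).and (hν.eventually_lt_atBot 0)).exists
  have hmin_eq : (fun x : ℝ => min x T) = fun x => -max (-x) (-T) :=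
    funext fun x => by rw [max_neg_neg, neg_neg]
  have hmax : Measurable fun x : ℝ => max x (-T) := by fun_prop
  have hmin : Measurable fun x : ℝ => min x T := by fun_prop
  obtain ⟨η, hη, hdom⟩ := PST (μ.map fun x => max x (-T)) (ν.map fun x => min x T)
    (Measure.isProbabilityMeasure_map hmax.aemeasurable)
    (Measure.isProbabilityMeasure_map hmin.aemeasurable)
    ((integrable_map_measure aestronglyMeasurable_id hmax.aemeasurable).2
      (integrable_max_const measurable_id' hμpos.ne _))
    ((integrable_map_measure aestronglyMeasurable_id hmin.aemeasurable).2
      (hmin_eq ▸ (integrable_max_const measurable_neg hνneg.ne _).neg))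
    (by
      rw [integral_map (f := fun x => x) hmax.aemeasurable aestronglyMeasurable_id,
        integral_map (f := fun x => x) hmin.aemeasurable aestronglyMeasurable_id, hmin_eq,
        integral_neg]
      linarith)
  exact ⟨η, hη, ((stochDom_map_of_le μ hmax fun x => le_max_left x _).conv_right η).trans
    (hdom.trans ((stochDom_map_of_ge ν hmin fun x => min_le_left x _).conv_right η))⟩
end
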